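/- Let P₁(λ)=1, P₂(λ)=λ−1, P_{i+1}(λ)=λP_i(λ)−P_{i−1}(λ). For every n ≥ 3: P_n has a root strictly greater than 1; letting γ_n be its largest root, P_{n−1}(x) > 0 for x ≥ γ_n, P_{n+1}(γ_n) < 0, and γ_n is strictly increasing in n. In particular γ₃ = (1+√5)/2. -/
import Mathlib


/-- The odd-`N` polynomial family: `P₁ = 1`, `P₂(λ) = λ − 1`,
`P_{i+1}(λ) = λ P_i(λ) − P_{i−1}(λ)`. -/
noncomputable def Po : ℕ → ℝ → ℝ
  | 0 => fun _ => 0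
  | 1 => fun _ => 1
  | 2 => fun x => x - 1
  | (n + 3) => fun x => x * Po (n + 2) x - Po (n + 1) x

lemma Po_succ (n : ℕ) (x : ℝ) : Po (n+3) x = x * Po (n+2) x - Po (n+1) x := rfl

lemma Po_cont : ∀ n, Continuous (Po n) := by
  intro n
  induction n using Nat.strong_induction_on with
  | _ n ih =>
    match n with
    | 0 => exact continuous_const
    | 1 => exact continuous_const
    | 2 => exact continuous_id.sub continuous_const
    | (m+3) =>
      have h1 := ih (m+2) (by omega)
      have h2 := ih (m+1) (by omega)
      exact (continuous_id.mul h1).sub h2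

lemma Po_ge_one : ∀ n, ∀ x : ℝ, 2 ≤ x → 1 ≤ Po (n+1) x ∧ Po (n+1) x ≤ Po (n+2) x := by
  intro n
  induction n with
  | zero =>
    intro x hx
    constructor
    · simp [Po]
    · show (1:ℝ) ≤ x - 1; linarith
  | succ m ih =>
    intro x hx
    obtain ⟨h1, h2⟩ := ih x hx
    have h3 : Po (m+3) x = x * Po (m+2) x - Po (m+1) x := rfl
    refine ⟨by linarith, ?_⟩
    rw [h3]
    nlinarith

lemma root_lt_two {n : ℕ} {x : ℝ} (h : Po (n+1) x = 0) : x < 2 := by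
  by_contra hx
  push_neg at hx
  have := (Po_ge_one n x hx).1
  linarith

lemma phi_facts : Po 3 ((1 + Real.sqrt 5) / 2) = 0 ∧
    ∀ x : ℝ, Po 3 x = 0 → x ≤ (1 + Real.sqrt 5) / 2 := by
  have hs : Real.sqrt 5 ^ 2 = 5 := Real.sq_sqrt (by norm_num)
  have hs0 : (0:ℝ) ≤ Real.sqrt 5 := Real.sqrt_nonneg 5
  have h3 : ∀ x : ℝ, Po 3 x = x * (x - 1) - 1 := fun x => rfl
  constructor
  · rw [h3]; nlinarith
  · intro x hx
    rw [h3] at hx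
    by_contra hlt
    push_neg at hlt
    nlinarith

lemma sqrt5_gt_one : (1:ℝ) < Real.sqrt 5 := by
  have : (1:ℝ) < Real.sqrt 4 := by
    rw [show (4:ℝ) = 2^2 by norm_num, Real.sqrt_sq (by norm_num)]; norm_num
  calc (1:ℝ) < Real.sqrt 4 := this
    _ ≤ Real.sqrt 5 := Real.sqrt_le_sqrt (by norm_num)

lemma Po_main : ∀ n : ℕ, ∃ γ : ℝ,
    (1 < γ ∧ Po (n+3) γ = 0 ∧ ∀ x : ℝ, Po (n+3) x = 0 → x ≤ γ) ∧
    ∀ x : ℝ, γ ≤ x → 0 < Po (n+2) x := by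
  intro n
  induction n with
  | zero =>
    refine ⟨(1 + Real.sqrt 5) / 2, ⟨?_, phi_facts.1, phi_facts.2⟩, ?_⟩
    · have := sqrt5_gt_one; linarith
    · intro x hx
      have := sqrt5_gt_one
      show (0:ℝ) < x - 1
      linarith
  | succ m ih =>
    obtain ⟨γ, ⟨hγ1, hγ0, hγmax⟩, hpos⟩ := ih
    have hneg : Po (m+4) γ < 0 := by
      have h := Po_succ (m+1) γ
      have hp := hpos γ le_rfl
      rw [show m+1+3 = m+4 from rfl, show m+1+2 = m+3 from rfl,
        show m+1+1 = m+2 from rfl] at h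
      rw [h, hγ0]
      linarith
    have hγ2 : γ < 2 := root_lt_two (n := m+2) hγ0
    have h2pos : (0:ℝ) < Po (m+4) 2 := by
      have := (Po_ge_one (m+3) 2 le_rfl).1; linarith
    -- a root of Po (m+4) in (γ, 2)
    obtain ⟨c, hcmem, hc0⟩ : ∃ c ∈ Set.Ioo γ 2, Po (m+4) c = 0 := by
      have h := intermediate_value_Ioo hγ2.le (Po_cont (m+4)).continuousOn
      obtain ⟨c, hc, hc0⟩ := h ⟨hneg, h2pos⟩
      exact ⟨c, hc, hc0⟩
    set S : Set ℝ := {x | Po (m+4) x = 0} with hS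
    have hSne : S.Nonempty := ⟨c, hc0⟩
    have hSbdd : BddAbove S := ⟨2, fun x hx => (root_lt_two (n := m+3) hx).le⟩
    have hSclosed : IsClosed S := isClosed_eq (Po_cont (m+4)) continuous_const
    set γ' := sSup S with hγ'
    have hγ'S : γ' ∈ S := hSclosed.csSup_mem hSne hSbdd
    have hcγ' : c ≤ γ' := le_csSup hSbdd hc0
    have hγγ' : γ < γ' := lt_of_lt_of_le hcmem.1 hcγ'
    refine ⟨γ', ⟨by linarith, hγ'S, fun x hx => le_csSup hSbdd hx⟩, ?_⟩
    intro x hx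
    by_contra hle
    push_neg at hle
    have hxγ : γ < x := lt_of_lt_of_le hγγ' hx
    rcases lt_or_ge x 2 with h2 | h2
    · have h2p : (0:ℝ) < Po (m+3) 2 := by
        have := (Po_ge_one (m+2) 2 le_rfl).1; linarith
      obtain ⟨z, hz, hz0⟩ : ∃ z ∈ Set.Icc x 2, Po (m+3) z = 0 := by
        have h := intermediate_value_Icc h2.le (Po_cont (m+3)).continuousOn
        obtain ⟨z, hz, hz0⟩ := h ⟨hle, h2p.le⟩
        exact ⟨z, hz, hz0⟩
      have := hγmax z hz0
      linarith [hz.1]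
    · have := (Po_ge_one (m+2) x h2).1; linarith

/-- For every `n ≥ 3`: `P_n` has a root `> 1`; if `γ_n` is its largest root, then
`P_{n−1}(x) > 0` for `x ≥ γ_n`, `P_{n+1}(γ_n) < 0`, and `γ_n` is strictly
increasing in `n`. In particular `γ₃ = (1+√5)/2`. -/
theorem Po_largest_root_properties :
    (∀ n : ℕ, 3 ≤ n →
      (∃ x : ℝ, 1 < x ∧ Po n x = 0) ∧
      ∀ γn : ℝ, (1 < γn ∧ Po n γn = 0 ∧ ∀ x : ℝ, Po n x = 0 → x ≤ γn) →
        ((∀ x : ℝ, γn ≤ x → 0 < Po (n - 1) x) ∧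
          Po (n + 1) γn < 0 ∧
          ∀ γm : ℝ, (1 < γm ∧ Po (n + 1) γm = 0 ∧ ∀ x : ℝ, Po (n + 1) x = 0 → x ≤ γm) →
            γn < γm)) ∧
    (Po 3 ((1 + Real.sqrt 5) / 2) = 0 ∧
      ∀ x : ℝ, Po 3 x = 0 → x ≤ (1 + Real.sqrt 5) / 2) := by
  refine ⟨?_, phi_facts⟩
  intro n hn
  obtain ⟨m, rfl⟩ : ∃ m, n = m + 3 := ⟨n - 3, by omega⟩
  obtain ⟨γ, ⟨hγ1, hγ0, hγmax⟩, hpos⟩ := Po_main m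
  refine ⟨⟨γ, hγ1, hγ0⟩, ?_⟩
  rintro γn ⟨h1, h0, hmax⟩
  have heq : γn = γ := le_antisymm (hγmax γn h0) (hmax γ hγ0)
  subst heq
  have hidx : m + 3 - 1 = m + 2 := rfl
  have hneg : Po (m + 3 + 1) γn < 0 := by
    have h := Po_succ (m+1) γn
    have hp := hpos γn le_rfl
    rw [show m+1+3 = m+3+1 from rfl, show m+1+2 = m+3 from rfl,
      show m+1+1 = m+2 from rfl] at h
    rw [h, h0]
    linarith
  refine ⟨by rw [hidx]; exact hpos, hneg, ?_⟩
  rintro γm ⟨hm1, hm0, hmmax⟩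
  have hγ2 : γn < 2 := root_lt_two (n := m+2) h0
  have h2pos : (0:ℝ) < Po (m+3+1) 2 := by
    have := (Po_ge_one (m+3) 2 le_rfl).1
    rw [show m+3+1 = m+4 from rfl]
    linarith
  obtain ⟨c, hcmem, hc0⟩ : ∃ c ∈ Set.Ioo γn 2, Po (m+3+1) c = 0 := by
    have h := intermediate_value_Ioo hγ2.le (Po_cont (m+3+1)).continuousOn
    obtain ⟨c, hc, hc0⟩ := h ⟨hneg, h2pos⟩
    exact ⟨c, hc, hc0⟩
  have := hmmax c hc0
  linarith [hcmem.1]
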